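/- arXiv:2204.06612 — 2 statements merged into one kernel-verified Lean document; each statement's English description precedes it below -/
import Mathlib

section
/- Let a₁, a₂, a₃ ∈ 𝔻 be pairwise distinct. Then for every λ ∈ 𝔻 and every t ∈ [0,1] the point (λ·m_{ta₁}(λ), λ·m_{ta₂}(λ), λ·m_{ta₃}(λ)) belongs to M_α with α = (a₃ − a₂, a₁ − a₃, a₂ − a₁); in particular each coordinate λ·m_{ta_j}(λ) lies in 𝔻. Moreover, if a₁, a₂, a₃ do not lie on a common real line in ℂ ≅ ℝ², then this triple α satisfies the triangle inequality. -/
/-!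
For `‖c‖, ‖z‖ < 1` one has `|1 - c̄z|² - |c - z|² = (1 - |c|²)(1 - |z|²) > 0`, so `m_c` maps `𝔻`
into `𝔻` and the coordinates `λ m_{ta_j}(λ)` lie in `𝔻`. The equation of `M_α` is a rational
identity in `λ`, checked by clearing the three denominators `1 - t ā_j λ`. For the second part,
equality in the triangle inequality `|x - z| ≤ |x - y| + |y - z|` in the strictly convex plane
forces `y` onto the segment `[x, z]`, so the strict inequalities hold for non-collinear points.
-/

open Complex Set

/-- The open unit tridisc in `ℂ³`. -/
def triDisc : Set (ℂ × ℂ × ℂ) :=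
  {z | ‖z.1‖ < 1 ∧ ‖z.2.1‖ < 1 ∧ ‖z.2.2‖ < 1}

/-- The variety `M_α ⊆ 𝔻³`. -/
def Mvar (a : ℂ × ℂ × ℂ) : Set (ℂ × ℂ × ℂ) :=
  {z | z ∈ triDisc ∧
    a.1 * z.1 + a.2.1 * z.2.1 + a.2.2 * z.2.2 =
      (starRingEnd ℂ) a.1 * z.2.1 * z.2.2 + (starRingEnd ℂ) a.2.1 * z.1 * z.2.2 +
        (starRingEnd ℂ) a.2.2 * z.1 * z.2.1}

/-- A triple `α ∈ ℂ³` satisfies the triangle inequality. -/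
def TriangleIneq (a : ℂ × ℂ × ℂ) : Prop :=
  ‖a.2.2‖ < ‖a.1‖ + ‖a.2.1‖ ∧
  ‖a.1‖ < ‖a.2.1‖ + ‖a.2.2‖ ∧
  ‖a.2.1‖ < ‖a.1‖ + ‖a.2.2‖

/-- The Möbius map `m_a(λ) = (a - λ)/(1 - conj(a)·λ)`. -/
noncomputable def mob (a z : ℂ) : ℂ := (a - z) / (1 - (starRingEnd ℂ) a * z)

open ComplexConjugate

theorem normSq_one_sub_conj_mul_sub_normSq_sub (c z : ℂ) :
    normSq (1 - conj c * z) - normSq (c - z) = (1 - normSq c) * (1 - normSq z) := by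
  simp only [normSq_apply, sub_re, sub_im, mul_re, mul_im, one_re, one_im, conj_re, conj_im]
  ring

theorem normSq_sub_lt_normSq_one_sub_conj_mul {c z : ℂ} (hc : ‖c‖ < 1) (hz : ‖z‖ < 1) :
    normSq (c - z) < normSq (1 - conj c * z) := by
  have hc' : normSq c < 1 := by
    rw [normSq_eq_norm_sq]; exact pow_lt_one₀ (norm_nonneg c) hc two_ne_zero
  have hz' : normSq z < 1 := by
    rw [normSq_eq_norm_sq]; exact pow_lt_one₀ (norm_nonneg z) hz two_ne_zero
  have := normSq_one_sub_conj_mul_sub_normSq_sub c z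
  nlinarith [mul_pos (sub_pos.2 hc') (sub_pos.2 hz')]

theorem one_sub_conj_mul_ne_zero {c z : ℂ} (hc : ‖c‖ < 1) (hz : ‖z‖ < 1) :
    1 - conj c * z ≠ 0 :=
  normSq_pos.1 ((normSq_nonneg _).trans_lt (normSq_sub_lt_normSq_one_sub_conj_mul hc hz))

theorem norm_mob_lt_one {c z : ℂ} (hc : ‖c‖ < 1) (hz : ‖z‖ < 1) : ‖mob c z‖ < 1 := by
  rw [mob, norm_div, div_lt_one (norm_pos_iff.2 (one_sub_conj_mul_ne_zero hc hz)), norm_def,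
    norm_def]
  exact Real.sqrt_lt_sqrt (normSq_nonneg _) (normSq_sub_lt_normSq_one_sub_conj_mul hc hz)

theorem norm_mul_mob_lt_one {c z : ℂ} (hc : ‖c‖ < 1) (hz : ‖z‖ < 1) : ‖z * mob c z‖ < 1 := by
  rw [norm_mul]
  exact mul_lt_one_of_nonneg_of_lt_one_left (norm_nonneg z) hz (norm_mob_lt_one hc hz).le

theorem Mvar_equation_mul_mob (a₁ a₂ a₃ lam : ℂ) (t : ℝ)
    (h₁ : 1 - conj (t * a₁) * lam ≠ 0) (h₂ : 1 - conj (t * a₂) * lam ≠ 0)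
    (h₃ : 1 - conj (t * a₃) * lam ≠ 0) :
    (a₃ - a₂) * (lam * mob (t * a₁) lam) + (a₁ - a₃) * (lam * mob (t * a₂) lam) +
        (a₂ - a₁) * (lam * mob (t * a₃) lam) =
      conj (a₃ - a₂) * (lam * mob (t * a₂) lam) * (lam * mob (t * a₃) lam) +
        conj (a₁ - a₃) * (lam * mob (t * a₁) lam) * (lam * mob (t * a₃) lam) +
        conj (a₂ - a₁) * (lam * mob (t * a₁) lam) * (lam * mob (t * a₂) lam) := by
  simp only [mob, div_eq_mul_inv]
  -- `field_simp` only recognises the denominators once they are opaque.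
  set d₁ := 1 - conj (t * a₁) * lam with hd₁
  set d₂ := 1 - conj (t * a₂) * lam with hd₂
  set d₃ := 1 - conj (t * a₃) * lam with hd₃
  field_simp
  simp only [hd₁, hd₂, hd₃, map_mul, map_sub, conj_ofReal]
  ring

theorem mul_mob_mem_Mvar {a₁ a₂ a₃ lam : ℂ} {t : ℝ} (h₁ : ‖(t : ℂ) * a₁‖ < 1)
    (h₂ : ‖(t : ℂ) * a₂‖ < 1) (h₃ : ‖(t : ℂ) * a₃‖ < 1) (hlam : ‖lam‖ < 1) :
    (lam * mob (t * a₁) lam, lam * mob (t * a₂) lam, lam * mob (t * a₃) lam) ∈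
      Mvar (a₃ - a₂, a₁ - a₃, a₂ - a₁) :=
  ⟨⟨norm_mul_mob_lt_one h₁ hlam, norm_mul_mob_lt_one h₂ hlam, norm_mul_mob_lt_one h₃ hlam⟩,
    Mvar_equation_mul_mob a₁ a₂ a₃ lam t (one_sub_conj_mul_ne_zero h₁ hlam)
      (one_sub_conj_mul_ne_zero h₂ hlam) (one_sub_conj_mul_ne_zero h₃ hlam)⟩

theorem norm_ofReal_mul_lt_one {t : ℝ} (ht : t ∈ Icc (0 : ℝ) 1) {a : ℂ} (ha : ‖a‖ < 1) :
    ‖(t : ℂ) * a‖ < 1 := by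
  rw [norm_mul, norm_real, Real.norm_of_nonneg ht.1]
  exact mul_lt_one_of_nonneg_of_lt_one_right ht.2 (norm_nonneg a) ha

theorem dist_lt_dist_add_dist_of_not_collinear {V P : Type*} [NormedAddCommGroup V]
    [NormedSpace ℝ V] [StrictConvexSpace ℝ V] [MetricSpace P] [NormedAddTorsor V P] {x y z : P}
    (h : ¬ Collinear ℝ ({x, y, z} : Set P)) : dist x z < dist x y + dist y z :=
  dist_lt_dist_add_dist_iff.2 fun hw => h hw.collinear

theorem triangleIneq_of_not_collinear {a₁ a₂ a₃ : ℂ}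
    (h : ¬ Collinear ℝ ({a₁, a₂, a₃} : Set ℂ)) : TriangleIneq (a₃ - a₂, a₁ - a₃, a₂ - a₁) := by
  have h₂₃₁ : ¬ Collinear ℝ ({a₂, a₃, a₁} : Set ℂ) := by
    rwa [Set.insert_comm, Set.pair_comm, Set.insert_comm, Set.pair_comm]
  have h₃₁₂ : ¬ Collinear ℝ ({a₃, a₁, a₂} : Set ℂ) := by
    rwa [Set.insert_comm, Set.pair_comm]
  simp only [TriangleIneq, ← dist_eq]
  refine ⟨?_, ?_, ?_⟩
  · simpa only [dist_comm] using dist_lt_dist_add_dist_of_not_collinear h₂₃₁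
  · simpa only [dist_comm, add_comm] using dist_lt_dist_add_dist_of_not_collinear h₃₁₂
  · simpa only [dist_comm, add_comm] using dist_lt_dist_add_dist_of_not_collinear h

theorem surface_N_subset_of_M_alpha_general
    (a₁ a₂ a₃ : ℂ) (ha₁ : ‖a₁‖ < 1) (ha₂ : ‖a₂‖ < 1)
    (ha₃ : ‖a₃‖ < 1) :
    (∀ lam : ℂ, ‖lam‖ < 1 → ∀ t : ℝ, t ∈ Set.Icc (0 : ℝ) 1 →
      (lam * mob ((t : ℂ) * a₁) lam, lam * mob ((t : ℂ) * a₂) lam,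
        lam * mob ((t : ℂ) * a₃) lam) ∈ Mvar (a₃ - a₂, a₁ - a₃, a₂ - a₁)) ∧
    (¬ Collinear ℝ ({a₁, a₂, a₃} : Set ℂ) →
      TriangleIneq (a₃ - a₂, a₁ - a₃, a₂ - a₁)) :=
  ⟨fun _ hlam _ ht => mul_mob_mem_Mvar (norm_ofReal_mul_lt_one ht ha₁)
      (norm_ofReal_mul_lt_one ht ha₂) (norm_ofReal_mul_lt_one ht ha₃) hlam,
    triangleIneq_of_not_collinear⟩

theorem surface_N_subset_of_M_alpha
    (a₁ a₂ a₃ : ℂ) (ha₁ : ‖a₁‖ < 1) (ha₂ : ‖a₂‖ < 1)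
    (ha₃ : ‖a₃‖ < 1)
    (h12 : a₁ ≠ a₂) (h13 : a₁ ≠ a₃) (h23 : a₂ ≠ a₃) :
    (∀ lam : ℂ, ‖lam‖ < 1 → ∀ t : ℝ, t ∈ Set.Icc (0 : ℝ) 1 →
      (lam * mob ((t : ℂ) * a₁) lam, lam * mob ((t : ℂ) * a₂) lam,
        lam * mob ((t : ℂ) * a₃) lam) ∈ Mvar (a₃ - a₂, a₁ - a₃, a₂ - a₁)) ∧
    (¬ Collinear ℝ ({a₁, a₂, a₃} : Set ℂ) →
      TriangleIneq (a₃ - a₂, a₁ - a₃, a₂ - a₁)) :=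
  surface_N_subset_of_M_alpha_general a₁ a₂ a₃ ha₁ ha₂ ha₃
end

section
/- Let α = (α₁,α₂,α₃) ∈ ℂ³ satisfy the triangle inequality and let f : clos(M_α) → ℂ be continuous on clos(M_α) and holomorphic on M_α. Then there exists a point w ∈ clos(M_α) ∩ 𝕋³ such that |f(w)| = max{|f(x)| : x ∈ clos(M_α)}; that is, clos(M_α) ∩ 𝕋³ is a boundary for the algebra of functions continuous on clos(M_α) and holomorphic on M_α. -/
open Complex Set

/-- The three-torus `𝕋³ ⊆ ℂ³`. -/
def triTorus : Set (ℂ × ℂ × ℂ) :=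
  {z | ‖z.1‖ = 1 ∧ ‖z.2.1‖ = 1 ∧ ‖z.2.2‖ = 1}

/-- `f` is holomorphic on the subset `S` of `ℂ³`: near each point of `S` it extends to a
holomorphic function on an open neighbourhood. -/
def HolomorphicOnSubset (f : ℂ × ℂ × ℂ → ℂ) (S : Set (ℂ × ℂ × ℂ)) : Prop :=
  ∀ p ∈ S, ∃ U : Set (ℂ × ℂ × ℂ), IsOpen U ∧ p ∈ U ∧
    ∃ F : ℂ × ℂ × ℂ → ℂ, DifferentiableOn ℂ F U ∧ ∀ x ∈ U ∩ S, F x = f x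

/-!
Every point `p ∈ M_α` lies on an analytic disc in `M_α` whose boundary circle lies in `𝕋³`; the
maximum modulus principle along these discs bounds `|f(p)|` by the maximum of `|f|` over
`clos(M_α) ∩ 𝕋³`, and continuity extends the bound to `clos(M_α)`.

The disc is built from Blaschke factors `z₂(λ)`, `z₃(λ)` with `z₂(0) = p₂`, `z₃(0) = p₃` and
`(z₂(1), z₃(1)) = (ω₂, ω₃)`, where `ω ∈ 𝕋²` solves `conj α₂ ω₃ + conj α₃ ω₂ = α₁` (such a node
exists by the triangle inequality). Solving the equation of `M_α` for `z₁` gives a quotient of two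
quadratics in `λ` which share the root `λ = 1`, hence a Möbius map; it sends `𝔻` into `𝔻` and
`𝕋` into `𝕋` because its value at `0` is `p₁ ∈ 𝔻`. The triangle inequality also guarantees that
the denominator `α₁ - conj α₂ z₃ - conj α₃ z₂` does not vanish on `M_α`.
-/

open Metric ComplexConjugate

lemma mul_conj_eq_one {z : ℂ} (hz : ‖z‖ = 1) : z * conj z = 1 := by
  rw [mul_conj', hz]; simp

noncomputable def blaschke (a b μ l : ℂ) : ℂ := μ * (conj a * l + conj b) / (a + b * l)

section Blaschke

variable {a b μ l : ℂ}

lemma norm_sq_add_mul_sub_norm_sq (a b l : ℂ) :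
    ‖a + b * l‖ ^ 2 - ‖conj a * l + conj b‖ ^ 2 = (‖a‖ ^ 2 - ‖b‖ ^ 2) * (1 - ‖l‖ ^ 2) := by
  simp only [← normSq_eq_norm_sq, normSq_apply, mul_re, mul_im, add_re, add_im, conj_re, conj_im]
  ring

lemma blaschke_denom_ne_zero (hab : ‖b‖ < ‖a‖) (hl : ‖l‖ ≤ 1) : a + b * l ≠ 0 := by
  intro h
  have : ‖a‖ ≤ ‖b‖ :=
    calc ‖a‖ = ‖b * l‖ := by rw [eq_neg_of_add_eq_zero_left h, norm_neg]
      _ ≤ ‖b‖ := by rw [norm_mul]; exact mul_le_of_le_one_right (norm_nonneg b) hl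
  linarith

lemma norm_blaschke_lt_one (hab : ‖b‖ < ‖a‖) (hμ : ‖μ‖ = 1) (hl : ‖l‖ < 1) :
    ‖blaschke a b μ l‖ < 1 := by
  have hden : 0 < ‖a + b * l‖ := norm_pos_iff.2 (blaschke_denom_ne_zero hab hl.le)
  rw [blaschke, norm_div, norm_mul, hμ, one_mul, div_lt_one hden,
    ← pow_lt_pow_iff_left₀ (norm_nonneg _) (norm_nonneg _) two_ne_zero, ← sub_pos,
    norm_sq_add_mul_sub_norm_sq]
  have : ‖b‖ ^ 2 < ‖a‖ ^ 2 := by gcongr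
  have : ‖l‖ ^ 2 < 1 := by nlinarith [norm_nonneg l]
  apply mul_pos <;> linarith

lemma norm_blaschke_eq_one (hab : ‖b‖ < ‖a‖) (hμ : ‖μ‖ = 1) (hl : ‖l‖ = 1) :
    ‖blaschke a b μ l‖ = 1 := by
  have hden : 0 < ‖a + b * l‖ := norm_pos_iff.2 (blaschke_denom_ne_zero hab hl.le)
  rw [blaschke, norm_div, norm_mul, hμ, one_mul, div_eq_one_iff_eq hden.ne',
    ← pow_left_inj₀ (norm_nonneg _) (norm_nonneg _) two_ne_zero, ← sub_eq_zero,
    ← neg_eq_zero, neg_sub, norm_sq_add_mul_sub_norm_sq, hl]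
  ring

lemma differentiableOn_blaschke (hab : ‖b‖ < ‖a‖) :
    DifferentiableOn ℂ (blaschke a b μ) (closedBall 0 1) :=
  DifferentiableOn.div (by fun_prop) (by fun_prop) fun _ hl ↦
    blaschke_denom_ne_zero hab (by simpa using hl)

@[simp]
lemma blaschke_zero : blaschke a b μ 0 = μ * conj b / a := by
  simp [blaschke]

lemma exists_blaschke_apply_zero_apply_one {p ω : ℂ} (hp : ‖p‖ < 1) (hω : ‖ω‖ = 1) :
    ∃ μ c : ℂ, ‖μ‖ = 1 ∧ ‖c‖ < 1 ∧ blaschke 1 c μ 0 = p ∧ blaschke 1 c μ 1 = ω := by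
  have hpω : ‖conj p * ω‖ < 1 := by rwa [norm_mul, norm_conj, hω, mul_one]
  have hden : 1 - conj p * ω ≠ 0 := fun h ↦ by
    rw [← eq_of_sub_eq_zero h, norm_one] at hpω
    exact hpω.false
  set τ := (ω - p) / (1 - conj p * ω) with hτ_def
  have hτ_eq : τ * (1 - conj p * ω) = ω - p := div_mul_cancel₀ _ hden
  have hτ : ‖τ‖ = 1 := by
    have : ω - p = ω * conj (1 - conj p * ω) := by
      simp only [map_sub, map_one, map_mul, conj_conj]
      linear_combination p * mul_conj_eq_one hω
    rw [hτ_def, norm_div, this, norm_mul, hω, one_mul, norm_conj,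
      div_self (norm_ne_zero_iff.2 hden)]
  have hc : ‖conj p * τ‖ < 1 := by rwa [norm_mul, norm_conj, hτ, mul_one]
  refine ⟨τ, conj p * τ, hτ, hc, ?_, ?_⟩
  · simp only [blaschke_zero, map_mul, conj_conj, div_one]
    linear_combination p * mul_conj_eq_one hτ
  · rw [blaschke, div_eq_iff (blaschke_denom_ne_zero (by simpa using hc) (by simp))]
    simp only [map_one, map_mul, conj_conj]
    linear_combination hτ_eq + p * mul_conj_eq_one hτ

end Blaschke

lemma exists_norm_one_mul_add_mul_eq {a b c : ℂ} (ha : a ≠ 0) (hb : b ≠ 0) (hc : c ≠ 0)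
    (h₁ : ‖c‖ ≤ ‖a‖ + ‖b‖) (h₂ : |‖a‖ - ‖b‖| ≤ ‖c‖) :
    ∃ u v : ℂ, ‖u‖ = 1 ∧ ‖v‖ = 1 ∧ a * u + b * v = c := by
  obtain ⟨θ, -, hθ⟩ : ∃ θ ∈ Icc 0 Real.pi, ‖(‖a‖ : ℂ) + ‖b‖ * exp (θ * I)‖ = ‖c‖ := by
    refine intermediate_value_Icc' Real.pi_pos.le (by fun_prop) ⟨?_, ?_⟩
    · rwa [exp_pi_mul_I, mul_neg_one, ← sub_eq_add_neg, ← ofReal_sub, norm_real, Real.norm_eq_abs]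
    · rwa [ofReal_zero, zero_mul, exp_zero, mul_one, ← ofReal_add, norm_real, Real.norm_eq_abs,
        abs_of_nonneg (by positivity)]
  set q : ℂ := ‖a‖ + ‖b‖ * exp (θ * I)
  have hq : q ≠ 0 := norm_ne_zero_iff.1 (hθ ▸ norm_ne_zero_iff.2 hc)
  have hρ : ‖c / q‖ = 1 := by rw [norm_div, hθ, div_self (norm_ne_zero_iff.2 hc)]
  refine ⟨‖a‖ * (c / q) / a, ‖b‖ * exp (θ * I) * (c / q) / b, ?_, ?_, ?_⟩
  · rw [norm_div, norm_mul, hρ, norm_real, Real.norm_of_nonneg (norm_nonneg a), mul_one,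
      div_self (norm_ne_zero_iff.2 ha)]
  · rw [norm_div, norm_mul, norm_mul, hρ, norm_exp_ofReal_mul_I, norm_real,
      Real.norm_of_nonneg (norm_nonneg b), mul_one, mul_one, div_self (norm_ne_zero_iff.2 hb)]
  · field_simp
    rfl

lemma sq_add_sq_ne_mul {w : ℂ} {R K : ℝ} (hw : ‖w‖ < R) (hK : |K| < 2 * R) :
    w ^ 2 + (R : ℂ) ^ 2 ≠ K * w := by
  intro h
  have hre := congrArg re h
  have him := congrArg im h
  simp only [sq, add_re, add_im, mul_re, mul_im, ofReal_re, ofReal_im] at hre him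
  have hw2 : w.re ^ 2 + w.im ^ 2 < R ^ 2 := by
    have := pow_lt_pow_left₀ hw (norm_nonneg w) two_ne_zero
    rwa [Complex.sq_norm, normSq_apply, ← sq, ← sq] at this
  have hK2 : K ^ 2 < (2 * R) ^ 2 := sq_lt_sq' (abs_lt.1 hK).1 (abs_lt.1 hK).2
  by_cases him0 : w.im = 0
  · rw [him0] at hre
    nlinarith [sq_nonneg (2 * w.re - K)]
  · have hK_eq : K = 2 * w.re := by
      apply mul_right_cancel₀ him0
      linarith
    subst hK_eq
    nlinarith

section AnalyticDisc

variable {E : Type*} [NormedAddCommGroup E] [NormedSpace ℂ E]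

structure IsAnalyticDisc (φ : ℂ → E) (S T : Set E) (p : E) : Prop where
  differentiableOn : DifferentiableOn ℂ φ (closedBall 0 1)
  map_zero : φ 0 = p
  mapsTo_ball : MapsTo φ (ball 0 1) S
  mapsTo_sphere : MapsTo φ (sphere 0 1) T

lemma IsAnalyticDisc.mapsTo_closedBall {φ : ℂ → E} {S T : Set E} {p : E}
    (h : IsAnalyticDisc φ S T p) : MapsTo φ (closedBall 0 1) (closure S) := by
  have hφ := h.differentiableOn.continuousOn
  rw [← closure_ball 0 one_ne_zero] at hφ ⊢
  exact h.mapsTo_ball.closure_of_continuousOn hφ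

end AnalyticDisc

lemma HolomorphicOnSubset.differentiableOn_comp {f : ℂ × ℂ × ℂ → ℂ} {S : Set (ℂ × ℂ × ℂ)}
    (hf : HolomorphicOnSubset f S) {φ : ℂ → ℂ × ℂ × ℂ} {U : Set ℂ} (hU : IsOpen U)
    (hφ : DifferentiableOn ℂ φ U) (hφS : MapsTo φ U S) : DifferentiableOn ℂ (f ∘ φ) U := by
  intro l hl
  obtain ⟨V, hV, hφV, F, hF, hFf⟩ := hf (φ l) (hφS hl)
  have hφl := hφ.differentiableAt (hU.mem_nhds hl)
  refine (((hF.differentiableAt (hV.mem_nhds hφV)).comp l hφl).congr_of_eventuallyEq ?_)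
    |>.differentiableWithinAt
  filter_upwards [hU.mem_nhds hl, hφl.continuousAt.preimage_mem_nhds (hV.mem_nhds hφV)]
    with m hmU hmV
  exact (hFf (φ m) ⟨hmV, hφS hmU⟩).symm

lemma IsAnalyticDisc.norm_le {f : ℂ × ℂ × ℂ → ℂ} {φ : ℂ → ℂ × ℂ × ℂ} {S T : Set (ℂ × ℂ × ℂ)}
    {p : ℂ × ℂ × ℂ} (h : IsAnalyticDisc φ S T p) (hfc : ContinuousOn f (closure S))
    (hfh : HolomorphicOnSubset f S) {C : ℝ} (hC : ∀ x ∈ closure S ∩ T, ‖f x‖ ≤ C) :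
    ‖f p‖ ≤ C := by
  have hg : DiffContOnCl ℂ (f ∘ φ) (ball 0 1) :=
    ⟨hfh.differentiableOn_comp isOpen_ball
      (h.differentiableOn.mono ball_subset_closedBall) h.mapsTo_ball,
     by
      rw [closure_ball 0 one_ne_zero]
      exact hfc.comp h.differentiableOn.continuousOn h.mapsTo_closedBall⟩
  rw [← h.map_zero]
  refine Complex.norm_le_of_forall_mem_frontier_norm_le isBounded_ball hg (fun l hl ↦ ?_)
    (subset_closure (mem_ball_self one_pos))
  rw [frontier_ball 0 one_ne_zero] at hl
  exact hC _ ⟨h.mapsTo_closedBall (sphere_subset_closedBall hl), h.mapsTo_sphere hl⟩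

theorem exists_forall_norm_le_of_isAnalyticDisc {S T : Set (ℂ × ℂ × ℂ)}
    (hS : IsCompact (closure S)) (hT : IsClosed T) (hSne : S.Nonempty)
    (hdisc : ∀ p ∈ S, ∃ φ, IsAnalyticDisc φ S T p) {f : ℂ × ℂ × ℂ → ℂ}
    (hfc : ContinuousOn f (closure S)) (hfh : HolomorphicOnSubset f S) :
    ∃ w ∈ closure S ∩ T, ∀ x ∈ closure S, ‖f x‖ ≤ ‖f w‖ := by
  have hne : (closure S ∩ T).Nonempty := by
    obtain ⟨p, hp⟩ := hSne
    obtain ⟨φ, hφ⟩ := hdisc p hp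
    have h1 : (1 : ℂ) ∈ sphere 0 1 := by simp
    exact ⟨φ 1, hφ.mapsTo_closedBall (sphere_subset_closedBall h1), hφ.mapsTo_sphere h1⟩
  obtain ⟨w, hw, hmax⟩ := (hS.inter_right hT).exists_isMaxOn hne (hfc.mono inter_subset_left).norm
  have hS_le : S ⊆ closure S ∩ (‖f ·‖) ⁻¹' Iic ‖f w‖ := fun p hp ↦
    ⟨subset_closure hp, (hdisc p hp).choose_spec.norm_le hfc hfh fun x hx ↦ hmax hx⟩
  have hclosed :=
    hfc.norm.preimage_isClosed_of_isClosed isClosed_closure (isClosed_Iic (a := ‖f w‖))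
  exact ⟨w, hw, fun x hx ↦ (closure_minimal hS_le hclosed hx).2⟩

def mvarPoly (α z : ℂ × ℂ × ℂ) : ℂ :=
  α.1 * z.1 + α.2.1 * z.2.1 + α.2.2 * z.2.2 -
    (conj α.1 * z.2.1 * z.2.2 + conj α.2.1 * z.1 * z.2.2 + conj α.2.2 * z.1 * z.2.1)

lemma mem_Mvar_iff {α z : ℂ × ℂ × ℂ} : z ∈ Mvar α ↔ z ∈ triDisc ∧ mvarPoly α z = 0 := by
  simp [Mvar, mvarPoly, sub_eq_zero]

lemma mvarPoly_div (α : ℂ × ℂ × ℂ) {n₁ n₂ n₃ q₁ q₂ q₃ : ℂ} (h₁ : q₁ ≠ 0) (h₂ : q₂ ≠ 0)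
    (h₃ : q₃ ≠ 0) :
    mvarPoly α (n₁ / q₁, n₂ / q₂, n₃ / q₃) =
      (n₁ * (α.1 * q₂ * q₃ - conj α.2.1 * n₃ * q₂ - conj α.2.2 * n₂ * q₃) -
        q₁ * (conj α.1 * n₂ * n₃ - α.2.1 * n₂ * q₃ - α.2.2 * n₃ * q₂)) / (q₁ * q₂ * q₃) := by
  simp only [mvarPoly]
  field_simp
  ring

lemma mvarPoly_blaschke_eq_zero {α : ℂ × ℂ × ℂ} {μ₂ μ₃ c₂ c₃ d₀ d₂ l : ℂ}
    (hμ₂ : ‖μ₂‖ = 1) (hμ₃ : ‖μ₃‖ = 1) (hc₂ : ‖c₂‖ < 1) (hc₃ : ‖c₃‖ < 1)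
    (hnode : conj α.2.1 * blaschke 1 c₃ μ₃ 1 + conj α.2.2 * blaschke 1 c₂ μ₂ 1 = α.1)
    (hd₀ : d₀ = α.1 - conj α.2.1 * (μ₃ * conj c₃) - conj α.2.2 * (μ₂ * conj c₂))
    (hd₂ : d₂ = α.1 * c₂ * c₃ - conj α.2.1 * μ₃ * c₂ - conj α.2.2 * μ₂ * c₃)
    (hd : ‖d₂‖ < ‖d₀‖) (hl : ‖l‖ ≤ 1) :
    mvarPoly α (blaschke d₀ (-d₂) (-(μ₂ * μ₃)) l, blaschke 1 c₂ μ₂ l, blaschke 1 c₃ μ₃ l) = 0 := by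
  have hq : ∀ {c : ℂ}, ‖c‖ < 1 → ∀ {l : ℂ}, ‖l‖ ≤ 1 → 1 + c * l ≠ 0 := fun hc _ hl ↦
    blaschke_denom_ne_zero (by simpa using hc) hl
  have hD_one : α.1 * (1 + c₂) * (1 + c₃) =
      conj α.2.1 * μ₃ * (1 + conj c₃) * (1 + c₂) + conj α.2.2 * μ₂ * (1 + conj c₂) * (1 + c₃) := by
    have h₂ := hq hc₂ (l := 1) (by simp)
    have h₃ := hq hc₃ (l := 1) (by simp)
    rw [← hnode]
    simp only [blaschke, map_one, mul_one] at h₂ h₃ ⊢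
    field_simp
  have hD_one' := congrArg conj hD_one
  simp only [map_mul, map_add, map_one, conj_conj] at hD_one'
  -- Along the disc, the cleared denominator and numerator of `z₁ = N(z₂, z₃) / D(z₂, z₃)` are
  -- quadratics in `l` with the common root `l = 1`.
  have hD : α.1 * (1 + c₂ * l) * (1 + c₃ * l) - conj α.2.1 * (μ₃ * (l + conj c₃)) * (1 + c₂ * l)
      - conj α.2.2 * (μ₂ * (l + conj c₂)) * (1 + c₃ * l) = (1 - l) * (d₀ - d₂ * l) := by
    rw [hd₀, hd₂]
    linear_combination l * hD_one
  have hN : conj α.1 * (μ₂ * (l + conj c₂)) * (μ₃ * (l + conj c₃))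
      - α.2.1 * (μ₂ * (l + conj c₂)) * (1 + c₃ * l) - α.2.2 * (μ₃ * (l + conj c₃)) * (1 + c₂ * l)
      = (1 - l) * (μ₂ * μ₃ * conj d₂ - μ₂ * μ₃ * conj d₀ * l) := by
    rw [hd₀, hd₂]
    simp only [map_mul, map_sub, conj_conj]
    linear_combination l * μ₂ * μ₃ * hD_one'
      + μ₂ * α.2.1 * (l + conj c₂) * (1 + c₃ * l) * mul_conj_eq_one hμ₃
      + μ₃ * α.2.2 * (l + conj c₃) * (1 + c₂ * l) * mul_conj_eq_one hμ₂
  simp only [blaschke, map_one, one_mul]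
  rw [mvarPoly_div α (blaschke_denom_ne_zero (by simpa using hd) hl) (hq hc₂ hl) (hq hc₃ hl),
    div_eq_zero_iff, hD, hN, map_neg]
  left
  ring

namespace TriangleIneq

variable {α : ℂ × ℂ × ℂ}

lemma ne_zero (hα : TriangleIneq α) : α.1 ≠ 0 ∧ α.2.1 ≠ 0 ∧ α.2.2 ≠ 0 := by
  obtain ⟨h₁, h₂, h₃⟩ := hα
  refine ⟨?_, ?_, ?_⟩ <;> intro h <;> simp only [h, norm_zero] at h₁ h₂ h₃ <;>
    linarith [norm_nonneg α.1, norm_nonneg α.2.1, norm_nonneg α.2.2]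

lemma exists_node (hα : TriangleIneq α) :
    ∃ ω₂ ω₃ : ℂ, ‖ω₂‖ = 1 ∧ ‖ω₃‖ = 1 ∧ conj α.2.1 * ω₃ + conj α.2.2 * ω₂ = α.1 := by
  obtain ⟨h₁, h₂, h₃⟩ := hα.ne_zero
  obtain ⟨ω₃, ω₂, hω₃, hω₂, h⟩ := exists_norm_one_mul_add_mul_eq (c := α.1)
    ((map_ne_zero _).2 h₂) ((map_ne_zero _).2 h₃) h₁
    (by rw [norm_conj, norm_conj]; linarith [hα.2.1])
    (by rw [norm_conj, norm_conj, abs_sub_le_iff]; constructor <;> linarith [hα.1, hα.2.2])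
  exact ⟨ω₂, ω₃, hω₂, hω₃, h⟩

lemma denom_ne_zero (hα : TriangleIneq α) {p : ℂ × ℂ × ℂ} (hp : p ∈ Mvar α) :
    α.1 - conj α.2.1 * p.2.2 - conj α.2.2 * p.2.1 ≠ 0 := by
  obtain ⟨⟨-, hp₂, -⟩, heq⟩ := hp
  obtain ⟨h₁, -, h₃⟩ := hα.ne_zero
  intro hD
  -- Eliminating `p.2.2` from `hD` and `heq` leaves `w² + R² = K w` for `w = conj (α₁ α₃) p₂`.
  refine sq_add_sq_ne_mul (w := conj α.1 * conj α.2.2 * p.2.1) (R := ‖α.1‖ * ‖α.2.2‖)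
    (K := ‖α.1‖ ^ 2 + ‖α.2.2‖ ^ 2 - ‖α.2.1‖ ^ 2) ?_ ?_ ?_
  · rw [norm_mul, norm_mul, norm_conj, norm_conj]
    exact mul_lt_of_lt_one_right (by positivity) hp₂
  · obtain ⟨t₁, t₂, t₃⟩ := hα
    rw [abs_lt]
    constructor <;> nlinarith [norm_nonneg α.1, norm_nonneg α.2.1, norm_nonneg α.2.2]
  · push_cast
    simp only [mul_pow, ← mul_conj']
    linear_combination conj α.1 * conj α.2.2 *
      (-(conj α.1 * p.2.1 - α.2.2) * hD - conj α.2.1 * (p.1 * hD - heq))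

lemma exists_isAnalyticDisc (hα : TriangleIneq α) {p : ℂ × ℂ × ℂ} (hp : p ∈ Mvar α) :
    ∃ φ, IsAnalyticDisc φ (Mvar α) triTorus p := by
  have hd₀ := hα.denom_ne_zero hp
  obtain ⟨⟨hp₁, hp₂, hp₃⟩, hpM⟩ := hp
  obtain ⟨ω₂, ω₃, hω₂, hω₃, hnode⟩ := hα.exists_node
  obtain ⟨μ₂, c₂, hμ₂, hc₂, hB₂, hB₂ω⟩ := exists_blaschke_apply_zero_apply_one hp₂ hω₂
  obtain ⟨μ₃, c₃, hμ₃, hc₃, hB₃, hB₃ω⟩ := exists_blaschke_apply_zero_apply_one hp₃ hω₃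
  rw [blaschke_zero, div_one] at hB₂ hB₃
  set d₀ := α.1 - conj α.2.1 * p.2.2 - conj α.2.2 * p.2.1
  set d₂ := α.1 * c₂ * c₃ - conj α.2.1 * μ₃ * c₂ - conj α.2.2 * μ₂ * c₃
  have hp₁_eq : p.1 * d₀ = μ₂ * μ₃ * conj d₂ := by
    simp only [d₀, d₂, map_sub, map_mul, conj_conj, ← hB₂, ← hB₃] at hpM ⊢
    linear_combination hpM + α.2.1 * μ₂ * conj c₂ * mul_conj_eq_one hμ₃
      + α.2.2 * μ₃ * conj c₃ * mul_conj_eq_one hμ₂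
  have hd : ‖d₂‖ < ‖d₀‖ := by
    have := congrArg norm hp₁_eq
    rw [norm_mul, norm_mul, norm_mul, hμ₂, hμ₃, norm_conj, one_mul, one_mul] at this
    rw [← this]
    exact mul_lt_of_lt_one_left (norm_pos_iff.2 hd₀) hp₁
  have hd' : ‖-d₂‖ < ‖d₀‖ := by rwa [norm_neg]
  have hμ : ‖-(μ₂ * μ₃)‖ = 1 := by rw [norm_neg, norm_mul, hμ₂, hμ₃, one_mul]
  have hc₂' : ‖c₂‖ < ‖(1 : ℂ)‖ := by rwa [norm_one]
  have hc₃' : ‖c₃‖ < ‖(1 : ℂ)‖ := by rwa [norm_one]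
  refine ⟨fun l ↦ (blaschke d₀ (-d₂) (-(μ₂ * μ₃)) l, blaschke 1 c₂ μ₂ l, blaschke 1 c₃ μ₃ l),
    ⟨?_, ?_, fun l hl ↦ ?_, fun l hl ↦ ?_⟩⟩
  · exact (differentiableOn_blaschke hd').prodMk
      ((differentiableOn_blaschke hc₂').prodMk (differentiableOn_blaschke hc₃'))
  · simp only [blaschke_zero, map_neg, div_one, hB₂, hB₃]
    refine Prod.ext ?_ rfl
    rw [div_eq_iff hd₀, hp₁_eq]
    ring
  · rw [mem_ball_zero_iff] at hl
    refine mem_Mvar_iff.2 ⟨⟨norm_blaschke_lt_one hd' hμ hl, norm_blaschke_lt_one hc₂' hμ₂ hl,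
      norm_blaschke_lt_one hc₃' hμ₃ hl⟩, ?_⟩
    refine mvarPoly_blaschke_eq_zero hμ₂ hμ₃ hc₂ hc₃ (by rw [hB₂ω, hB₃ω, hnode]) ?_ rfl hd hl.le
    simp only [d₀, hB₂, hB₃]
  · rw [mem_sphere_zero_iff_norm] at hl
    exact ⟨norm_blaschke_eq_one hd' hμ hl, norm_blaschke_eq_one hc₂' hμ₂ hl,
      norm_blaschke_eq_one hc₃' hμ₃ hl⟩

end TriangleIneq

lemma zero_mem_Mvar (α : ℂ × ℂ × ℂ) : 0 ∈ Mvar α := by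
  simp [Mvar, triDisc]

lemma isCompact_closure_Mvar (α : ℂ × ℂ × ℂ) : IsCompact (closure (Mvar α)) := by
  refine (isBounded_closedBall (x := 0) (r := 1)).subset (fun z hz ↦ ?_) |>.isCompact_closure
  obtain ⟨⟨h₁, h₂, h₃⟩, -⟩ := hz
  rw [mem_closedBall_zero_iff, Prod.norm_def, Prod.norm_def]
  exact max_le h₁.le (max_le h₂.le h₃.le)

lemma isClosed_triTorus : IsClosed triTorus :=
  ((isClosed_eq (by fun_prop) continuous_const).inter
    ((isClosed_eq (by fun_prop) continuous_const).inter
      (isClosed_eq (by fun_prop) continuous_const)))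

theorem torus_points_form_boundary_for_M_alpha
    (α : ℂ × ℂ × ℂ) (hα : TriangleIneq α)
    (f : ℂ × ℂ × ℂ → ℂ)
    (hfc : ContinuousOn f (closure (Mvar α)))
    (hfh : HolomorphicOnSubset f (Mvar α)) :
    ∃ w ∈ closure (Mvar α) ∩ triTorus,
      ∀ x ∈ closure (Mvar α), ‖f x‖ ≤ ‖f w‖ :=
  exists_forall_norm_le_of_isAnalyticDisc (isCompact_closure_Mvar α) isClosed_triTorus
    ⟨0, zero_mem_Mvar α⟩ (fun _ hp ↦ hα.exists_isAnalyticDisc hp) hfc hfh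
end
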